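/- arXiv:2301.07404 — 5 statements merged into one kernel-verified Lean document; each statement's English description precedes it below -/
import Mathlib

section
/- The Rado complex is homogeneous: if R is an ∞-ample simplicial complex with countably infinite vertex set, then for every two finite subsets U, U' ⊆ V(R) and every isomorphism f : R_U → R_{U'} of the induced subcomplexes, there exists an automorphism F : R → R with F restricted to R_U equal to f. -/
/-! Back and forth. A finite partial isomorphism `P : X_U → X_{U'}` of an ample complex extends
to any further vertex `w`: ampleness applied to `U'` and to the image under `P` of
`Lk(w) ∩ X_U` yields a vertex `v ∉ U'` with `Lk(v) ∩ X_{U'} = P(Lk(w) ∩ X_U)`, and then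
`P ∪ {w ↦ v}` is again a partial isomorphism. Alternating this step for `P` and `P⁻¹` along an
enumeration of the countable vertex set gives an increasing chain of partial isomorphisms whose
domains and ranges exhaust `V(X)`; their union is the required automorphism. -/

/-- An abstract simplicial complex on vertex type `V`: a collection of nonempty
finite subsets (simplexes) closed under passing to nonempty subsets.  The vertex
set is the set of `v` with `{v}` a simplex. -/
structure SComplex (V : Type*) where
  faces : Set (Finset V)
  nonempty_of_mem : ∀ ⦃σ : Finset V⦄, σ ∈ faces → σ.Nonempty
  down_closed : ∀ ⦃σ : Finset V⦄, σ ∈ faces → ∀ ⦃τ : Finset V⦄, τ ⊆ σ → τ.Nonempty → τ ∈ faces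

namespace SComplex

variable {V W : Type*}

/-- The vertex set of a simplicial complex. -/
def verts (X : SComplex V) : Set V := {v | {v} ∈ X.faces}

/-- The set of faces of the induced subcomplex `X_U`. -/
def induced (X : SComplex V) (U : Set V) : Set (Finset V) :=
  {σ | σ ∈ X.faces ∧ (σ : Set V) ⊆ U}

/-- The induced subcomplex `X_U`, as a simplicial complex. -/
def inducedSub (X : SComplex V) (U : Set V) : SComplex V where
  faces := X.induced U
  nonempty_of_mem := fun _ h => X.nonempty_of_mem h.1
  down_closed := fun _ h _ hτ hne =>
    ⟨X.down_closed h.1 hτ hne, Set.Subset.trans (Finset.coe_subset.mpr hτ) h.2⟩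

/-- The link of a vertex `v`: simplexes `σ` with `v ∉ σ` and `σ ∪ {v} ∈ X`. -/
def link [DecidableEq V] (X : SComplex V) (v : V) : Set (Finset V) :=
  {σ | σ ∈ X.faces ∧ v ∉ σ ∧ insert v σ ∈ X.faces}

/-- The link of a simplex `σ`: simplexes `τ` with `τ ∩ σ = ∅` and `τ ∪ σ ∈ X`. -/
def linkSimplex [DecidableEq V] (X : SComplex V) (σ : Finset V) : SComplex V where
  faces := {τ | τ ∈ X.faces ∧ Disjoint τ σ ∧ τ ∪ σ ∈ X.faces}
  nonempty_of_mem := fun _ h => X.nonempty_of_mem h.1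
  down_closed := by
    intro τ hτ ρ hρ hne
    refine ⟨X.down_closed hτ.1 hρ hne, Finset.disjoint_of_subset_left hρ hτ.2.1, ?_⟩
    exact X.down_closed hτ.2.2 (Finset.union_subset_union_left hρ)
      (hne.mono Finset.subset_union_left)

/-- A downward closed family of finite sets (a subcomplex, when contained in a complex). -/
def DownClosed (A : Set (Finset V)) : Prop :=
  ∀ ⦃σ : Finset V⦄, σ ∈ A → ∀ ⦃τ : Finset V⦄, τ ⊆ σ → τ.Nonempty → τ ∈ A

/-- `X` is `r`-ample: `X` is nonempty and for every `U ⊆ V(X)` with `|U| ≤ r` and every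
subcomplex `A ⊆ X_U` there is a vertex `v ∈ V(X) \ U` with `Lk_X(v) ∩ X_U = A`. -/
def Ample [DecidableEq V] (X : SComplex V) (r : ℕ) : Prop :=
  X.faces.Nonempty ∧
  ∀ U : Finset V, (U : Set V) ⊆ X.verts → U.card ≤ r →
    ∀ A : Set (Finset V), A ⊆ X.induced (U : Set V) → DownClosed A →
      ∃ v ∈ X.verts, v ∉ U ∧ X.link v ∩ X.induced (U : Set V) = A

/-- An embedding of `A` into `X`: an isomorphism of `A` onto an induced subcomplex of `X`,
recorded as a vertex map injective on `V(A)` such that a set of vertexes of `A` is a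
simplex of `A` iff its image is a simplex of `X`. -/
def IsEmbedding [DecidableEq V] (f : W → V) (A : SComplex W) (X : SComplex V) : Prop :=
  Set.InjOn f A.verts ∧
  ∀ σ : Finset W, (σ : Set W) ⊆ A.verts → (σ ∈ A.faces ↔ σ.image f ∈ X.faces)

/-- An isomorphism of `A` onto `X`: a bijection of vertex sets carrying simplexes to
simplexes in both directions. -/
def IsIso [DecidableEq V] (f : W → V) (A : SComplex W) (X : SComplex V) : Prop :=
  Set.BijOn f A.verts X.verts ∧
  ∀ σ : Finset W, (σ : Set W) ⊆ A.verts → (σ ∈ A.faces ↔ σ.image f ∈ X.faces)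

/-- The complex obtained from `X` by removing a set `𝓕` of simplexes: all faces of `X`
containing no member of `𝓕` as a subset. -/
def remove (X : SComplex V) (𝓕 : Set (Finset V)) : SComplex V where
  faces := {σ | σ ∈ X.faces ∧ ∀ τ ∈ 𝓕, ¬ τ ⊆ σ}
  nonempty_of_mem := fun _ h => X.nonempty_of_mem h.1
  down_closed := fun _ hσ _ hρ hne =>
    ⟨X.down_closed hσ.1 hρ hne, fun τ hτ hsub => hσ.2 τ hτ (hsub.trans hρ)⟩

/-- `M'(r)`: the number of simplicial complexes (including the empty complex) with vertex
set contained in a fixed `r`-element set. -/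
noncomputable def Mprime (r : ℕ) : ℕ :=
  Nat.card {A : Set (Finset (Fin r)) // (∀ σ ∈ A, σ.Nonempty) ∧ DownClosed A}

/-- The 1-skeleton of a complex, as a simple graph on the ambient vertex type. -/
def skeletonGraph [DecidableEq V] (Y : SComplex V) : SimpleGraph V where
  Adj u v := u ≠ v ∧ ({u, v} : Finset V) ∈ Y.faces
  symm := ⟨fun u v h => ⟨h.1.symm, by rw [Finset.pair_comm]; exact h.2⟩⟩
  loopless := ⟨fun v h => h.1 rfl⟩

/-- The vertexes spanned by a family of simplexes. -/
def vertsOf (L : Set (Finset V)) : Set V := ⋃ σ ∈ L, (σ : Set V)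

/-- `X` is `r`-conic: `X` is nonempty and every subcomplex `L ⊆ X` with at most `r`
vertexes is contained in the closed star of some vertex of `X`. -/
def Conic [DecidableEq V] (X : SComplex V) (r : ℕ) : Prop :=
  X.faces.Nonempty ∧
  ∀ L : Set (Finset V), L ⊆ X.faces → DownClosed L →
    (vertsOf L).Finite → (vertsOf L).ncard ≤ r →
      ∃ v ∈ X.verts, ∀ σ ∈ L, insert v σ ∈ X.faces

/-- The intersection `⋂ᵢ St_K(vᵢ)` of the closed stars of the vertexes `v i`,
as a simplicial complex. -/
def starsInter [DecidableEq V] (K : SComplex V) {t : ℕ} (v : Fin t → V) : SComplex V where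
  faces := {σ | σ ∈ K.faces ∧ ∀ i, insert (v i) σ ∈ K.faces}
  nonempty_of_mem := fun _ h => K.nonempty_of_mem h.1
  down_closed := fun _ hσ _ hρ hne =>
    ⟨K.down_closed hσ.1 hρ hne, fun i =>
      K.down_closed (hσ.2 i) (Finset.insert_subset_insert _ hρ)
        ⟨v i, Finset.mem_insert_self _ _⟩⟩

end SComplex

/-- The set `Q_{n,p} = {gᵃ : a ≡ β² mod p for some integer β}` in a finite field. -/
def paleyQ {F : Type*} [Field F] (p : ℕ) (g : Fˣ) : Set F :=
  {x | ∃ α : ℤ, (∃ β : ℤ, (p : ℤ) ∣ α - β ^ 2) ∧ x = ((g ^ α : Fˣ) : F)}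

/-- The product `∏_{i<j} (e i - e j)` over all pairs from an enumeration `e`. -/
def pairProd {F : Type*} [Field F] {k : ℕ} (e : Fin k → F) : F :=
  ∏ q ∈ Finset.univ.filter (fun q : Fin k × Fin k => q.1 < q.2), (e q.1 - e q.2)

/-- The Iterated Paley simplicial complex `X_{n,p}`: vertex set `F = 𝔽_n`, and a nonempty
finite set is a simplex iff for every subset with at least two elements, the product of
the pairwise differences (in any enumeration) lies in `Q_{n,p}`. -/
def paleyComplex (F : Type*) [Field F] [DecidableEq F] (p : ℕ) (g : Fˣ) : SComplex F where
  faces := {σ | σ.Nonempty ∧ ∀ τ ⊆ σ, 2 ≤ τ.card →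
    ∀ e : Fin τ.card → F, Function.Injective e → Finset.image e Finset.univ = τ →
      pairProd e ∈ paleyQ p g}
  nonempty_of_mem := fun _ h => h.1
  down_closed := fun _ hσ _ hτ hne => ⟨hne, fun ρ hρ => hσ.2 ρ (hρ.trans hτ)⟩

lemma PartialEquiv.symm_image_image_finset_of_subset_source {α β : Type*} [DecidableEq α]
    [DecidableEq β] (e : PartialEquiv α β) {s : Finset α} (h : (s : Set α) ⊆ e.source) :
    (s.image e).image e.symm = s :=
  Finset.coe_injective (by push_cast; exact e.symm_image_image_of_subset_source h)

namespace SComplex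

variable {V : Type*}

lemma verts_inducedSub_subset (X : SComplex V) (U : Set V) : (X.inducedSub U).verts ⊆ U :=
  fun _ hv => by simpa using hv.2

lemma mem_inducedSub_faces_iff {X : SComplex V} {U : Set V} {σ : Finset V}
    (hσ : (σ : Set V) ⊆ U) : σ ∈ (X.inducedSub U).faces ↔ σ ∈ X.faces :=
  ⟨And.left, fun h => ⟨h, hσ⟩⟩

lemma singleton_mem_faces {X : SComplex V} {σ : Finset V} {v : V} (hσ : σ ∈ X.faces)
    (hv : v ∈ σ) : {v} ∈ X.faces :=
  X.down_closed hσ (Finset.singleton_subset_iff.mpr hv) (Finset.singleton_nonempty v)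

variable [DecidableEq V] {X : SComplex V}

lemma Ample.verts_nonempty {r : ℕ} (h : X.Ample r) : X.verts.Nonempty :=
  let ⟨_, hσ⟩ := h.1
  let ⟨v, hv⟩ := X.nonempty_of_mem hσ
  ⟨v, singleton_mem_faces hσ hv⟩

lemma downClosed_link (w : V) : DownClosed (X.link w) :=
  fun _ hσ _ hρ hne => ⟨X.down_closed hσ.1 hρ hne, fun hw => hσ.2.1 (hρ hw),
    X.down_closed hσ.2.2 (Finset.insert_subset_insert w hρ) (Finset.insert_nonempty w _)⟩

lemma insert_mem_faces_iff_mem_link {w : V} {σ : Finset V} (hσ : σ.Nonempty) (hw : w ∉ σ) :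
    insert w σ ∈ X.faces ↔ σ ∈ X.link w :=
  ⟨fun h => ⟨X.down_closed h (Finset.subset_insert w σ) hσ, hw, h⟩, fun h => h.2.2⟩

structure PartIso (X : SComplex V) extends PartialEquiv V V where
  finite_source : source.Finite
  source_subset : source ⊆ X.verts
  target_subset : target ⊆ X.verts
  mem_faces_iff :
    ∀ σ : Finset V, (σ : Set V) ⊆ source → (σ ∈ X.faces ↔ σ.image toFun ∈ X.faces)

namespace PartIso

instance : CoeFun (PartIso X) fun _ => V → V := ⟨fun P => P.toPartialEquiv⟩

lemma finite_target (P : PartIso X) : P.target.Finite := by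
  rw [← P.image_source_eq_target]
  exact P.finite_source.image _

def symm (P : PartIso X) : PartIso X where
  toPartialEquiv := P.toPartialEquiv.symm
  finite_source := P.finite_target
  source_subset := P.target_subset
  target_subset := P.source_subset
  mem_faces_iff τ hτ := by
    have hσ : ((τ.image P.toPartialEquiv.symm : Finset V) : Set V) ⊆ P.source := by
      rw [Finset.coe_image]
      exact (P.mapsTo_symm.mono_left hτ).image_subset
    have himage : (τ.image P.toPartialEquiv.symm).image P = τ :=
      P.toPartialEquiv.symm.symm_image_image_finset_of_subset_source hτ
    rw [P.mem_faces_iff _ hσ, himage]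

instance : Preorder (PartIso X) where
  le P Q := P.source ⊆ Q.source ∧ Set.EqOn Q P P.source
  le_refl _ := ⟨subset_rfl, Set.eqOn_refl _ _⟩
  le_trans _ _ _ hPQ hQS := ⟨hPQ.1.trans hQS.1, (hQS.2.mono hPQ.1).trans hPQ.2⟩

lemma symm_le_symm {P Q : PartIso X} (h : P ≤ Q) : P.symm ≤ Q.symm := by
  have htarget : P.target ⊆ Q.target := by
    rw [← P.image_source_eq_target, ← Q.image_source_eq_target, ← h.2.image_eq]
    exact Set.image_mono h.1
  refine ⟨htarget, fun y hy => ?_⟩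
  obtain ⟨x, hx, rfl⟩ : y ∈ P '' P.source := P.image_source_eq_target.symm ▸ hy
  change Q.toPartialEquiv.symm (P x) = P.toPartialEquiv.symm (P x)
  rw [P.left_inv hx, ← h.2 hx, Q.left_inv (h.1 hx)]

noncomputable def extend (P : PartIso X) {w v : V} (hw : w ∉ P.source) (hv : v ∉ P.target)
    (hwX : w ∈ X.verts) (hwv : ∀ σ : Finset V, (σ : Set V) ⊆ P.source →
      (insert w σ ∈ X.faces ↔ insert v (σ.image P) ∈ X.faces)) : PartIso X where
  toFun := Function.update P w v
  invFun := Function.update P.toPartialEquiv.symm v w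
  source := insert w P.source
  target := insert v P.target
  map_source' := by
    rintro x (rfl | hx)
    · simp
    · rw [Function.update_of_ne (ne_of_mem_of_not_mem hx hw)]
      exact Or.inr (P.map_source hx)
  map_target' := by
    rintro y (rfl | hy)
    · simp
    · rw [Function.update_of_ne (ne_of_mem_of_not_mem hy hv)]
      exact Or.inr (P.map_target hy)
  left_inv' := by
    rintro x (rfl | hx)
    · simp
    · rw [Function.update_of_ne (ne_of_mem_of_not_mem hx hw),
        Function.update_of_ne (ne_of_mem_of_not_mem (P.map_source hx) hv), P.left_inv hx]
  right_inv' := by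
    rintro y (rfl | hy)
    · simp
    · rw [Function.update_of_ne (ne_of_mem_of_not_mem hy hv),
        Function.update_of_ne (ne_of_mem_of_not_mem (P.map_target hy) hw), P.right_inv hy]
  finite_source := P.finite_source.insert w
  source_subset := Set.insert_subset hwX P.source_subset
  target_subset := by
    have hvX : {v} ∈ X.faces := by simpa using (hwv ∅ (by simp)).mp hwX
    exact Set.insert_subset hvX P.target_subset
  mem_faces_iff σ hσ := by
    have hF : Set.EqOn (Function.update P w v) P P.source :=
      fun x hx => Function.update_of_ne (ne_of_mem_of_not_mem hx hw) _ _
    by_cases hwσ : w ∈ σ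
    · have hσ₀ : ((σ.erase w : Finset V) : Set V) ⊆ P.source := fun x hx =>
        (hσ (Finset.mem_of_mem_erase hx)).resolve_left (Finset.ne_of_mem_erase hx)
      rw [← Finset.insert_erase hwσ, Finset.image_insert, Function.update_self,
        Finset.image_congr (hF.mono hσ₀)]
      exact hwv _ hσ₀
    · have hσ' : (σ : Set V) ⊆ P.source := fun x hx =>
        (hσ hx).resolve_left (ne_of_mem_of_not_mem hx hwσ)
      rw [Finset.image_congr (hF.mono hσ')]
      exact P.mem_faces_iff σ hσ'

lemma le_extend (P : PartIso X) {w v : V} (hw : w ∉ P.source) (hv : v ∉ P.target)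
    (hwX : w ∈ X.verts) (hwv : ∀ σ : Finset V, (σ : Set V) ⊆ P.source →
      (insert w σ ∈ X.faces ↔ insert v (σ.image P) ∈ X.faces)) :
    P ≤ P.extend hw hv hwX hwv :=
  ⟨Set.subset_insert w _, fun _ hx => Function.update_of_ne (ne_of_mem_of_not_mem hx hw) _ _⟩

lemma exists_insert_mem_faces_iff {r : ℕ} (hX : X.Ample r) (P : PartIso X)
    (hr : P.target.ncard ≤ r) {w : V} (hw : w ∉ P.source) (hwX : w ∈ X.verts) :
    ∃ v ∉ P.target, ∀ σ : Finset V, (σ : Set V) ⊆ P.source →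
      (insert w σ ∈ X.faces ↔ insert v (σ.image P) ∈ X.faces) := by
  obtain ⟨U', hU'⟩ := P.finite_target.exists_finset_coe
  -- `A` is the image under `P` of `Lk(w) ∩ X_{source}`.
  let A : Set (Finset V) :=
    {τ | τ ∈ X.induced P.target ∧ τ.image P.toPartialEquiv.symm ∈ X.link w}
  have hA : DownClosed A := fun τ hτ ρ hρ hne =>
    ⟨(X.inducedSub P.target).down_closed hτ.1 hρ hne,
      downClosed_link w hτ.2 (Finset.image_subset_image hρ) (hne.image _)⟩
  obtain ⟨v, hvX, hvU', hlink⟩ := hX.2 U' (hU' ▸ P.target_subset)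
    (by rwa [← hU', Set.ncard_coe_finset] at hr) A (hU' ▸ fun τ hτ => hτ.1) hA
  rw [hU'] at hlink
  replace hvU' : v ∉ P.target := hU' ▸ hvU'
  refine ⟨v, hvU', fun σ hσ => ?_⟩
  rcases σ.eq_empty_or_nonempty with rfl | hσne
  · rw [Finset.image_empty, Finset.insert_empty, Finset.insert_empty]
    exact iff_of_true hwX hvX
  have hτ : ((σ.image P : Finset V) : Set V) ⊆ P.target := by
    rw [Finset.coe_image]
    exact (P.mapsTo.mono_left hσ).image_subset
  have hσσ : (σ.image P).image P.toPartialEquiv.symm = σ :=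
    P.symm_image_image_finset_of_subset_source hσ
  rw [insert_mem_faces_iff_mem_link hσne (fun h => hw (hσ h)),
    insert_mem_faces_iff_mem_link (hσne.image _) (fun h => hvU' (hτ h))]
  constructor
  · intro hσw
    have hmem : σ.image P ∈ A := ⟨⟨(P.mem_faces_iff σ hσ).mp hσw.1, hτ⟩, by rwa [hσσ]⟩
    exact (hlink ▸ hmem).1
  · intro hσv
    have hmem : σ.image P ∈ A := hlink ▸ ⟨hσv, hσv.1, hτ⟩
    exact hσσ ▸ hmem.2

lemma exists_le_mem_source (hX : ∀ r, 1 ≤ r → X.Ample r) (P : PartIso X) {w : V}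
    (hwX : w ∈ X.verts) : ∃ Q, P ≤ Q ∧ w ∈ Q.source := by
  by_cases hw : w ∈ P.source
  · exact ⟨P, le_rfl, hw⟩
  obtain ⟨v, hv, hwv⟩ :=
    exists_insert_mem_faces_iff (hX (P.target.ncard + 1) (Nat.le_add_left 1 _)) P
      (Nat.le_succ _) hw hwX
  exact ⟨P.extend hw hv hwX hwv, P.le_extend hw hv hwX hwv, Set.mem_insert w _⟩

lemma exists_le_mem_source_target (hX : ∀ r, 1 ≤ r → X.Ample r) (P : PartIso X) {w : V}
    (hwX : w ∈ X.verts) : ∃ Q, P ≤ Q ∧ w ∈ Q.source ∧ w ∈ Q.target := by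
  obtain ⟨Q, hPQ, hwQ⟩ := exists_le_mem_source hX P hwX
  obtain ⟨S, hQS, hwS⟩ := exists_le_mem_source hX Q.symm hwX
  exact ⟨S.symm, hPQ.trans (symm_le_symm hQS), (symm_le_symm hQS).1 hwQ, hwS⟩

noncomputable def ofIsIso [Nonempty V] {f : V → V} {U U' : Set V} (hU : U.Finite)
    (hf : IsIso f (X.inducedSub U) (X.inducedSub U')) : PartIso X where
  toPartialEquiv := hf.1.toPartialEquiv
  finite_source := hU.subset (X.verts_inducedSub_subset U)
  source_subset _ hv := hv.1
  target_subset _ hv := hv.1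
  mem_faces_iff σ hσ := by
    have hσf : ((σ.image f : Finset V) : Set V) ⊆ U' := by
      rw [Finset.coe_image]
      exact (hf.1.mapsTo.mono_left hσ).image_subset.trans (X.verts_inducedSub_subset U')
    rw [← mem_inducedSub_faces_iff (hσ.trans (X.verts_inducedSub_subset U)), hf.2 σ hσ]
    exact mem_inducedSub_faces_iff hσf

lemma exists_eqOn_of_monotone (P : ℕ → PartIso X) (hP : Monotone P) :
    ∃ F : V → V, ∀ n, Set.EqOn F (P n) (P n).source := by
  classical
  refine ⟨fun x => if h : ∃ n, x ∈ (P n).source then P h.choose x else x, fun n x hx => ?_⟩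
  have h : ∃ n, x ∈ (P n).source := ⟨n, hx⟩
  simp only [dif_pos h]
  rcases le_total h.choose n with hle | hle
  · exact ((hP hle).2 h.choose_spec).symm
  · exact (hP hle).2 hx

lemma exists_isIso_of_monotone (P : ℕ → PartIso X) (hP : Monotone P)
    (hsource : X.verts ⊆ ⋃ n, (P n).source) (htarget : X.verts ⊆ ⋃ n, (P n).target) :
    ∃ F : V → V, IsIso F X X ∧ ∀ n, Set.EqOn F (P n) (P n).source := by
  obtain ⟨F, hF⟩ := exists_eqOn_of_monotone P hP
  have hfin : ∀ σ : Finset V, (σ : Set V) ⊆ X.verts → ∃ n, (σ : Set V) ⊆ (P n).source :=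
    fun σ hσ => Directed.exists_mem_subset_of_finset_subset_biUnion
      (Monotone.directed_le fun _ _ h => (hP h).1) (hσ.trans hsource)
  refine ⟨F, ⟨⟨?_, ?_, ?_⟩, ?_⟩, hF⟩
  · intro x hx
    obtain ⟨n, hn⟩ := Set.mem_iUnion.mp (hsource hx)
    rw [hF n hn]
    exact (P n).target_subset ((P n).map_source hn)
  · intro x hx y hy hxy
    obtain ⟨n, hn⟩ := hfin {x, y} (by simp [Set.insert_subset_iff, hx, hy])
    have hxn : x ∈ (P n).source := hn (by simp)
    have hyn : y ∈ (P n).source := hn (by simp)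
    exact (P n).injOn hxn hyn (by rwa [← hF n hxn, ← hF n hyn])
  · intro y hy
    obtain ⟨n, hn⟩ := Set.mem_iUnion.mp (htarget hy)
    refine ⟨(P n).toPartialEquiv.symm y, (P n).source_subset ((P n).map_target hn), ?_⟩
    rw [hF n ((P n).map_target hn), (P n).right_inv hn]
  · intro σ hσ
    obtain ⟨n, hn⟩ := hfin σ hσ
    rw [Finset.image_congr ((hF n).mono hn)]
    exact (P n).mem_faces_iff σ hn

lemma exists_isIso_eqOn (hc : X.verts.Countable) (hX : ∀ r, 1 ≤ r → X.Ample r)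
    (P : PartIso X) : ∃ F : V → V, IsIso F X X ∧ Set.EqOn F P P.source := by
  obtain ⟨e, he⟩ := hc.exists_eq_range (hX 1 le_rfl).verts_nonempty
  choose step hstep using fun (Q : PartIso X) n =>
    exists_le_mem_source_target hX Q (he ▸ Set.mem_range_self n : e n ∈ X.verts)
  let Ps : ℕ → PartIso X := fun n => Nat.rec P (fun n Q => step Q n) n
  have hcover : ∀ n, e n ∈ (Ps (n + 1)).source ∧ e n ∈ (Ps (n + 1)).target :=
    fun n => (hstep (Ps n) n).2
  obtain ⟨F, hF, hFP⟩ := exists_isIso_of_monotone Ps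
    (monotone_nat_of_le_succ fun n => (hstep (Ps n) n).1)
    (he ▸ Set.range_subset_iff.mpr fun n => Set.mem_iUnion_of_mem (n + 1) (hcover n).1)
    (he ▸ Set.range_subset_iff.mpr fun n => Set.mem_iUnion_of_mem (n + 1) (hcover n).2)
  exact ⟨F, hF, hFP 0⟩

end PartIso

end SComplex

open SComplex in
theorem stmt14_general {V : Type*} [DecidableEq V]
    (R : SComplex V) (hRc : R.verts.Countable)
    (hR : ∀ r : ℕ, 1 ≤ r → R.Ample r)
    (U U' : Set V) (hU : U.Finite)
    (f : V → V) (hf : IsIso f (R.inducedSub U) (R.inducedSub U')) :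
    ∃ F : V → V, IsIso F R R ∧ Set.EqOn F f (R.inducedSub U).verts :=
  have : Nonempty V := ⟨(hR 1 le_rfl).verts_nonempty.some⟩
  PartIso.exists_isIso_eqOn hRc hR (PartIso.ofIsIso hU hf)

open SComplex in
/-- homogeneity of the Rado complex: every isomorphism between finite
induced subcomplexes extends to an automorphism. -/
theorem stmt14 {V : Type*} [DecidableEq V]
    (R : SComplex V) (hRc : R.verts.Countable) (hRi : R.verts.Infinite)
    (hR : ∀ r : ℕ, 1 ≤ r → R.Ample r)
    (U U' : Set V) (hU : U.Finite) (hU' : U'.Finite)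
    (hUv : U ⊆ R.verts) (hU'v : U' ⊆ R.verts)
    (f : V → V) (hf : IsIso f (R.inducedSub U) (R.inducedSub U')) :
    ∃ F : V → V, IsIso F R R ∧ Set.EqOn F f (R.inducedSub U).verts :=
  stmt14_general R hRc hR U U' hU f hf
end

section
/- Every universal and homogeneous simplicial complex with countably infinite vertex set is ∞-ample (hence isomorphic to the Rado complex): if X has countably infinite vertex set, every countable simplicial complex is isomorphic to an induced subcomplex of X, and every isomorphism between finite induced subcomplexes of X extends to an automorphism of X, then X is r-ample for every r ≥ 1. -/
/-!
Given `U ⊆ V(X)` and a subcomplex `A ⊆ X_U`, adjoin to `X_U` a new vertex with link `A`.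
Universality embeds this finite complex into `X` by some `f`, and `f` restricts to an
isomorphism `X_U ≅ X_{f(U)}`, which homogeneity extends to an automorphism `G` of `X`.
The `G`-preimage of the image of the new vertex then has link `A` in `X_U`. Nonemptiness of `X` is the case `U = ∅`.
-/

namespace SComplex

open Set Finset

section

variable {V W : Type*}

lemma verts_inducedSub (X : SComplex V) (T : Set V) : (X.inducedSub T).verts = X.verts ∩ T := by
  ext v
  simp [verts, inducedSub, induced]

lemma verts_inducedSub_of_subset {X : SComplex V} {T : Set V} (hT : T ⊆ X.verts) :
    (X.inducedSub T).verts = T := by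
  rw [verts_inducedSub, inter_eq_right.mpr hT]

variable [DecidableEq V]

lemma IsIso.image_mem_faces_iff {f : W → V} {Y : SComplex W} {X : SComplex V}
    {S : Set V} (hf : IsIso f Y (X.inducedSub S)) {σ : Finset W} (hσ : ↑σ ⊆ Y.verts) :
    σ.image f ∈ X.faces ↔ σ ∈ Y.faces := by
  have himage : ↑(σ.image f) ⊆ S := by
    rw [coe_image]
    exact (image_mono hσ).trans (hf.1.image_eq ▸ (verts_inducedSub X S).subset.trans
      inter_subset_right)
  exact ⟨fun h => (hf.2 σ hσ).mpr ⟨h, himage⟩, fun h => ((hf.2 σ hσ).mp h).1⟩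

lemma IsIso.mem_verts_of_mem {f : W → V} {Y : SComplex W} {X : SComplex V} {S : Set V}
    (hf : IsIso f Y (X.inducedSub S)) {y : W} (hy : y ∈ Y.verts) : f y ∈ X.verts :=
  ((verts_inducedSub X S).subset (hf.1.mapsTo hy)).1

lemma isIso_inducedSub_image {X : SComplex W} {Z : SComplex V} {U : Set W}
    (hU : U ⊆ X.verts) {g : W → V} (hg : InjOn g U) (hgU : g '' U ⊆ Z.verts)
    (hfaces : ∀ σ : Finset W, ↑σ ⊆ U → (σ.image g ∈ Z.faces ↔ σ ∈ X.faces)) :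
    IsIso g (X.inducedSub U) (Z.inducedSub (g '' U)) := by
  rw [IsIso, verts_inducedSub_of_subset hU, verts_inducedSub_of_subset hgU]
  refine ⟨hg.bijOn_image, fun σ hσ => ?_⟩
  have himage : ↑(σ.image g) ⊆ g '' U := by rw [coe_image]; exact image_mono hσ
  simp only [inducedSub, induced, mem_ofPred_eq, hfaces σ hσ, hσ, himage, and_true]

lemma link_inter_induced_eq {X : SComplex V} {U : Finset V} {A : Set (Finset V)}
    {v : V} (hvU : v ∉ U) (hA : A ⊆ X.induced U)
    (hlink : ∀ σ : Finset V, ↑σ ⊆ (U : Set V) → σ.Nonempty →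
      (insert v σ ∈ X.faces ↔ σ ∈ A)) :
    X.link v ∩ X.induced U = A := by
  ext σ
  constructor
  · rintro ⟨⟨-, -, hins⟩, hσX, hσU⟩
    exact (hlink σ hσU (X.nonempty_of_mem hσX)).mp hins
  · intro hσA
    obtain ⟨hσX, hσU⟩ := hA hσA
    refine ⟨⟨hσX, fun hvσ => hvU (hσU hvσ), ?_⟩, hσX, hσU⟩
    exact (hlink σ hσU (X.nonempty_of_mem hσX)).mpr hσA

/-- The induced subcomplex `X_U` with one new vertex `none` adjoined, whose link is `A`. -/
def adjoinVertex (X : SComplex V) (U : Set V) (A : Set (Finset V))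
    (hA : A ⊆ X.induced U) (hdc : DownClosed A) : SComplex (Option V) where
  faces := {τ | τ.Nonempty ∧
    (τ.eraseNone.Nonempty → τ.eraseNone ∈ if none ∈ τ then A else X.induced U)}
  nonempty_of_mem := fun _ h => h.1
  down_closed := by
    rintro τ ⟨-, hτ⟩ ρ hρτ hρ
    refine ⟨hρ, fun hρ' => ?_⟩
    have hsub : ρ.eraseNone ⊆ τ.eraseNone := eraseNone.monotone hρτ
    have hτA := hτ (hρ'.mono hsub)
    split_ifs at hτA ⊢ with hnρ hnτ hnτ
    · exact hdc hτA hsub hρ'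
    · exact absurd (hρτ hnρ) hnτ
    · exact (X.inducedSub U).down_closed (hA hτA) hsub hρ'
    · exact (X.inducedSub U).down_closed hτA hsub hρ'

section adjoinVertex

variable {X : SComplex V} {U : Set V} {A : Set (Finset V)} {hA : A ⊆ X.induced U}
  {hdc : DownClosed A}

lemma image_some_mem_adjoinVertex_iff {σ : Finset V} :
    σ.image some ∈ (adjoinVertex X U A hA hdc).faces ↔ σ ∈ X.induced U := by
  rcases σ.eq_empty_or_nonempty with rfl | hσ
  · simpa [adjoinVertex] using fun h => (X.nonempty_of_mem h.1).ne_empty rfl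
  · simp [adjoinVertex, eraseNone_image_some, hσ]

lemma insert_none_mem_adjoinVertex_iff {σ : Finset V} (hσ : σ.Nonempty) :
    insert none (σ.image some) ∈ (adjoinVertex X U A hA hdc).faces ↔ σ ∈ A := by
  have : (insert none (σ.image some)).eraseNone = σ := by ext; simp
  simp [adjoinVertex, this, hσ]

lemma verts_adjoinVertex (hU : U ⊆ X.verts) :
    (adjoinVertex X U A hA hdc).verts = insert none (some '' U) := by
  ext (_ | u)
  · simp [verts, adjoinVertex]
  · rw [verts, mem_ofPred_eq, ← Finset.image_singleton, image_some_mem_adjoinVertex_iff]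
    simp only [induced, mem_ofPred_eq, coe_singleton, Set.singleton_subset_iff, mem_insert_iff,
      reduceCtorEq, Set.mem_image, Option.some.injEq, exists_eq_right, false_or,
      and_iff_right_iff_imp]
    exact fun h => hU h

lemma some_mem_verts_adjoinVertex (hU : U ⊆ X.verts) {u : V} (hu : u ∈ U) :
    some u ∈ (adjoinVertex X U A hA hdc).verts :=
  verts_adjoinVertex hU ▸ mem_insert_of_mem _ ⟨u, hu, rfl⟩

lemma none_mem_verts_adjoinVertex (hU : U ⊆ X.verts) :
    none ∈ (adjoinVertex X U A hA hdc).verts :=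
  verts_adjoinVertex hU ▸ mem_insert _ _

lemma IsIso.isIso_comp_some {S : Set V} {f : Option V → V}
    (hf : IsIso f (adjoinVertex X U A hA hdc) (X.inducedSub S)) (hU : U ⊆ X.verts) :
    IsIso (f ∘ some) (X.inducedSub U) (X.inducedSub ((f ∘ some) '' U)) := by
  have hsome : ∀ {u}, u ∈ U → some u ∈ (adjoinVertex X U A hA hdc).verts :=
    some_mem_verts_adjoinVertex hU
  refine isIso_inducedSub_image hU (fun u hu u' hu' h => Option.some_injective _ <|
      hf.1.injOn (hsome hu) (hsome hu') h) ?_ fun σ hσ => ?_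
  · rintro _ ⟨u, hu, rfl⟩
    exact hf.mem_verts_of_mem (hsome hu)
  · have hσY : ↑(σ.image some) ⊆ (adjoinVertex X U A hA hdc).verts := by
      rw [coe_image]; rintro _ ⟨u, hu, rfl⟩; exact hsome (hσ hu)
    rw [← Finset.image_image, hf.image_mem_faces_iff hσY, image_some_mem_adjoinVertex_iff]
    exact and_iff_left hσ

end adjoinVertex

def IsUniversal (X : SComplex V) : Prop :=
  ∀ (W : Type) (Y : SComplex W), Y.verts.Countable →
    ∃ S : Set V, S ⊆ X.verts ∧ ∃ f : W → V, IsIso f Y (X.inducedSub S)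

def IsHomogeneous (X : SComplex V) : Prop :=
  ∀ U U' : Set V, U.Finite → U'.Finite → U ⊆ X.verts → U' ⊆ X.verts →
    ∀ f : V → V, IsIso f (X.inducedSub U) (X.inducedSub U') →
      ∃ F : V → V, IsIso F X X ∧ Set.EqOn F f (X.inducedSub U).verts

end

theorem exists_link_inter_induced_eq {V : Type} [DecidableEq V] {X : SComplex V}
    (huniv : X.IsUniversal) (hhom : X.IsHomogeneous) {U : Finset V} (hU : ↑U ⊆ X.verts)
    {A : Set (Finset V)} (hA : A ⊆ X.induced U) (hdc : DownClosed A) :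
    ∃ v ∈ X.verts, v ∉ U ∧ X.link v ∩ X.induced U = A := by
  set Y := adjoinVertex X U A hA hdc
  obtain ⟨S, -, f, hf⟩ := huniv (Option V) Y <| by
    rw [verts_adjoinVertex hU]; exact ((U.finite_toSet.image some).insert none).countable
  have hsome : ∀ {u}, u ∈ U → some u ∈ Y.verts := some_mem_verts_adjoinVertex hU
  have hnone : none ∈ Y.verts := none_mem_verts_adjoinVertex hU
  set g : V → V := f ∘ some
  have hg : IsIso g (X.inducedSub U) (X.inducedSub (g '' U)) := hf.isIso_comp_some hU
  have hgU : g '' U ⊆ X.verts := image_subset_iff.2 fun u hu => hf.mem_verts_of_mem (hsome hu)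
  obtain ⟨G, hG, hGg⟩ := hhom U (g '' U) U.finite_toSet (U.finite_toSet.image g) hU hgU g hg
  rw [verts_inducedSub_of_subset hU] at hGg
  obtain ⟨w, hw, hGw⟩ := hG.1.surjOn (hf.mem_verts_of_mem hnone)
  have hwU : w ∉ U := fun hwU => Option.some_ne_none w <|
    hf.1.injOn (hsome hwU) hnone ((hGg hwU).symm.trans hGw)
  refine ⟨w, hw, hwU, link_inter_induced_eq hwU hA fun σ hσU hσ => ?_⟩
  have hwσ : ↑(insert w σ) ⊆ X.verts := by
    rw [coe_insert]; exact Set.insert_subset hw (hσU.trans hU)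
  have hσY : ↑(insert none (σ.image some)) ⊆ Y.verts := by
    rw [coe_insert, coe_image]
    exact Set.insert_subset hnone (by rintro _ ⟨u, hu, rfl⟩; exact hsome (hσU hu))
  calc insert w σ ∈ X.faces ↔ (insert w σ).image G ∈ X.faces := hG.2 _ hwσ
    _ ↔ (insert none (σ.image some)).image f ∈ X.faces := by
      rw [image_insert, image_insert, hGw, Finset.image_image, Finset.image_congr (hGg.mono hσU)]
    _ ↔ σ ∈ A := by rw [hf.image_mem_faces_iff hσY, insert_none_mem_adjoinVertex_iff hσ]

end SComplex

open SComplex in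
theorem stmt15_general {V : Type} [DecidableEq V] (X : SComplex V)
    (huniv : ∀ (W : Type) (Y : SComplex W), Y.verts.Countable →
      ∃ S : Set V, S ⊆ X.verts ∧ ∃ f : W → V, IsIso f Y (X.inducedSub S))
    (hhom : ∀ U U' : Set V, U.Finite → U'.Finite → U ⊆ X.verts → U' ⊆ X.verts →
      ∀ f : V → V, IsIso f (X.inducedSub U) (X.inducedSub U') →
        ∃ F : V → V, IsIso F X X ∧ Set.EqOn F f (X.inducedSub U).verts) :
    ∀ r : ℕ, 1 ≤ r → X.Ample r := by
  have hext := @exists_link_inter_induced_eq V _ X huniv hhom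
  intro r _
  obtain ⟨v, hv, -⟩ := hext (U := ∅) (by simp) (A := ∅) (by simp) fun _ h => h.elim
  exact ⟨⟨{v}, hv⟩, fun U hU _ A hA hdc => hext hU hA hdc⟩

open SComplex in
/-- a universal and homogeneous simplicial complex with countably infinite
vertex set is `r`-ample for every `r ≥ 1`. -/
theorem stmt15 {V : Type} [DecidableEq V] (X : SComplex V)
    (hc : X.verts.Countable) (hi : X.verts.Infinite)
    (huniv : ∀ (W : Type) (Y : SComplex W), Y.verts.Countable →
      ∃ S : Set V, S ⊆ X.verts ∧ ∃ f : W → V, IsIso f Y (X.inducedSub S))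
    (hhom : ∀ U U' : Set V, U.Finite → U'.Finite → U ⊆ X.verts → U' ⊆ X.verts →
      ∀ f : V → V, IsIso f (X.inducedSub U) (X.inducedSub U') →
        ∃ F : V → V, IsIso F X X ∧ Set.EqOn F f (X.inducedSub U).verts) :
    ∀ r : ℕ, 1 ≤ r → X.Ample r :=
  stmt15_general X huniv hhom
end

section
/- Let X be an ∞-ample simplicial complex with countably infinite vertex set, let U ⊆ V(X) be a finite subset and A ⊆ X_U a subcomplex. Let Z_{U,A} denote the set of vertexes v ∈ V(X) \ U satisfying Lk_X(v) ∩ X_U = A. Then Z_{U,A} is infinite, and the induced subcomplex of X on Z_{U,A} is itself ∞-ample (i.e., a Rado complex). -/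
/-!
Ampleness applied to `U ∪ U'`, with the prescribed trace `A ∪ B`, produces a vertex whose link
restricts to `A` on `U` (so it lies in `Z_{U,A}`) and to `B` on any finite `U' ⊆ Z_{U,A}`;
this works because `U` and `Z_{U,A}` are disjoint, so `X_U` and `X_{U'}` share no simplex.
This extension property inside `Z_{U,A}` is exactly ampleness of the induced subcomplex, and
applied with `B = ∅` it shows that `Z_{U,A}` escapes every finite set.
-/

namespace SComplex

variable {V : Type*} {X : SComplex V}

theorem induced_mono {U U' : Set V} (h : U ⊆ U') : X.induced U ⊆ X.induced U' :=
  fun _ hσ => ⟨hσ.1, hσ.2.trans h⟩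

theorem inducedSub_induced_of_subset {U W : Set V} (h : U ⊆ W) :
    (X.inducedSub W).induced U = X.induced U := by
  ext σ
  exact ⟨fun hσ => ⟨hσ.1.1, hσ.2⟩, fun hσ => ⟨⟨hσ.1, hσ.2.trans h⟩, hσ.2⟩⟩

theorem mem_verts_inducedSub {W : Set V} {v : V} :
    v ∈ (X.inducedSub W).verts ↔ v ∈ X.verts ∧ v ∈ W := by
  simp [verts, inducedSub, induced]

theorem DownClosed.union {A B : Set (Finset V)} (hA : DownClosed A) (hB : DownClosed B) :
    DownClosed (A ∪ B) := by
  rintro σ (hσ | hσ) τ hτ hne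
  · exact Or.inl (hA hσ hτ hne)
  · exact Or.inr (hB hσ hτ hne)

theorem inter_induced_eq_of_inter_induced_union {L A B : Set (Finset V)} {U U' : Set V}
    (hUU' : Disjoint U U') (hA : A ⊆ X.induced U) (hB : B ⊆ X.induced U')
    (h : L ∩ X.induced (U ∪ U') = A ∪ B) : L ∩ X.induced U = A := by
  ext σ
  constructor
  · rintro ⟨hσL, hσU⟩
    have hσ : σ ∈ A ∪ B := h ▸ ⟨hσL, induced_mono Set.subset_union_left hσU⟩
    refine hσ.resolve_right fun hσB => ?_
    obtain ⟨x, hx⟩ := X.nonempty_of_mem hσU.1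
    exact Set.disjoint_left.mp hUU' (hσU.2 hx) ((hB hσB).2 hx)
  · intro hσA
    have hσ : σ ∈ L ∩ X.induced (U ∪ U') := h ▸ Or.inl hσA
    exact ⟨hσ.1, hA hσA⟩

variable [DecidableEq V]

theorem inducedSub_link_inter_induced {W U : Set V} {v : V} (hv : v ∈ W) (hU : U ⊆ W) :
    (X.inducedSub W).link v ∩ (X.inducedSub W).induced U = X.link v ∩ X.induced U := by
  rw [inducedSub_induced_of_subset hU]
  ext σ
  refine ⟨fun ⟨⟨hσ, hvσ, hins⟩, hσU⟩ => ⟨⟨hσ.1, hvσ, hins.1⟩, hσU⟩,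
    fun ⟨⟨hσ, hvσ, hins⟩, hσU⟩ => ⟨⟨⟨hσ, hσU.2.trans hU⟩, hvσ, hins, ?_⟩, hσU⟩⟩
  rw [Finset.coe_insert]
  exact Set.insert_subset hv (hσU.2.trans hU)

theorem Ample.exists_link_inter_induced_eq {r : ℕ} {U U' : Finset V} (hX : X.Ample r)
    (hUU' : Disjoint U U') (hU : (U : Set V) ⊆ X.verts) (hU' : (U' : Set V) ⊆ X.verts)
    (hr : (U ∪ U').card ≤ r) {A B : Set (Finset V)}
    (hA : A ⊆ X.induced U) (hAdc : DownClosed A) (hB : B ⊆ X.induced U') (hBdc : DownClosed B) :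
    ∃ v ∈ X.verts, v ∉ U ∧ v ∉ U' ∧
      X.link v ∩ X.induced U = A ∧ X.link v ∩ X.induced U' = B := by
  have hUU'set : Disjoint (U : Set V) U' := Finset.disjoint_coe.mpr hUU'
  obtain ⟨v, hv, hvUU', hlink⟩ := hX.2 (U ∪ U') (by simpa using ⟨hU, hU'⟩) hr (A ∪ B)
    (Set.union_subset (hA.trans (induced_mono (by simp))) (hB.trans (induced_mono (by simp))))
    (hAdc.union hBdc)
  rw [Finset.coe_union] at hlink
  rw [Finset.mem_union, not_or] at hvUU'
  refine ⟨v, hv, hvUU'.1, hvUU'.2, inter_induced_eq_of_inter_induced_union hUU'set hA hB hlink,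
    inter_induced_eq_of_inter_induced_union hUU'set.symm hB hA ?_⟩
  rwa [Set.union_comm, Set.union_comm B]

def ExtensionProperty (W : Set V) : Prop :=
  ∀ U : Finset V, (U : Set V) ⊆ W → ∀ B ⊆ X.induced (U : Set V), DownClosed B →
    ∃ v ∈ W, v ∉ U ∧ X.link v ∩ X.induced (U : Set V) = B

theorem ExtensionProperty.exists_not_mem {W : Set V} (hW : X.ExtensionProperty W)
    (F : Finset V) (hF : (F : Set V) ⊆ W) : ∃ v ∈ W, v ∉ F := by
  obtain ⟨v, hvW, hvF, -⟩ := hW F hF ∅ (Set.empty_subset _) (fun _ h => h.elim)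
  exact ⟨v, hvW, hvF⟩

theorem ExtensionProperty.infinite {W : Set V} (hW : X.ExtensionProperty W) : W.Infinite := by
  intro hfin
  obtain ⟨v, hvW, hvF⟩ := hW.exists_not_mem hfin.toFinset (by simp)
  exact hvF (hfin.mem_toFinset.mpr hvW)

theorem ExtensionProperty.ample_inducedSub {W : Set V} (hW : X.ExtensionProperty W)
    (hWX : W ⊆ X.verts) (r : ℕ) : (X.inducedSub W).Ample r := by
  refine ⟨?_, fun U hU _ B hB hBdc => ?_⟩
  · obtain ⟨v, hvW, -⟩ := hW.exists_not_mem ∅ (by simp)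
    exact ⟨{v}, hWX hvW, by simpa using hvW⟩
  · have hUW : (U : Set V) ⊆ W := fun x hx => (mem_verts_inducedSub.mp (hU hx)).2
    rw [inducedSub_induced_of_subset hUW] at hB ⊢
    obtain ⟨v, hvW, hvU, hlink⟩ := hW U hUW B hB hBdc
    refine ⟨v, mem_verts_inducedSub.mpr ⟨hWX hvW, hvW⟩, hvU, ?_⟩
    rw [← inducedSub_induced_of_subset hUW, inducedSub_link_inter_induced hvW hUW, hlink]

/-- The set `Z_{U,A}`. -/
def linkClass (U : Finset V) (A : Set (Finset V)) : Set V :=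
  {v | v ∈ X.verts ∧ v ∉ U ∧ X.link v ∩ X.induced (U : Set V) = A}

theorem linkClass_subset_verts (U : Finset V) (A : Set (Finset V)) : X.linkClass U A ⊆ X.verts :=
  fun _ hv => hv.1

theorem extensionProperty_linkClass (hX : ∀ r : ℕ, 1 ≤ r → X.Ample r)
    {U : Finset V} (hU : (U : Set V) ⊆ X.verts)
    {A : Set (Finset V)} (hA : A ⊆ X.induced (U : Set V)) (hAdc : DownClosed A) :
    X.ExtensionProperty (X.linkClass U A) := by
  intro U' hU' B hB hBdc
  have hUU' : Disjoint U U' :=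
    Finset.disjoint_right.mpr fun x hx => (hU' hx).2.1
  obtain ⟨v, hv, hvU, hvU', hlinkA, hlinkB⟩ :=
    (hX _ (Nat.le_add_left 1 (U ∪ U').card)).exists_link_inter_induced_eq hUU' hU
      (fun x hx => (hU' hx).1) (Nat.le_succ _) hA hAdc hB hBdc
  exact ⟨v, ⟨hv, hvU, hlinkA⟩, hvU', hlinkB⟩

end SComplex

open SComplex in
theorem stmt16_general {V : Type*} [DecidableEq V] (X : SComplex V)
    (hX : ∀ r : ℕ, 1 ≤ r → X.Ample r)
    (U : Finset V) (hU : (U : Set V) ⊆ X.verts)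
    (A : Set (Finset V)) (hA : A ⊆ X.induced (U : Set V)) (hAdc : DownClosed A) :
    {v | v ∈ X.verts ∧ v ∉ U ∧ X.link v ∩ X.induced (U : Set V) = A}.Infinite ∧
      ∀ r : ℕ, 1 ≤ r →
        (X.inducedSub
          {v | v ∈ X.verts ∧ v ∉ U ∧ X.link v ∩ X.induced (U : Set V) = A}).Ample r := by
  have hZ : X.ExtensionProperty (X.linkClass U A) := extensionProperty_linkClass hX hU hA hAdc
  exact ⟨hZ.infinite, fun r _ => hZ.ample_inducedSub (linkClass_subset_verts U A) r⟩

open SComplex in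
/-- in a Rado complex, for finite `U ⊆ V(X)` and a subcomplex `A ⊆ X_U`,
the set `Z_{U,A}` of vertexes `v ∉ U` with `Lk_X(v) ∩ X_U = A` is infinite, and the
induced subcomplex on it is again `∞`-ample. -/
theorem stmt16 {V : Type*} [DecidableEq V] (X : SComplex V)
    (hc : X.verts.Countable) (hi : X.verts.Infinite)
    (hX : ∀ r : ℕ, 1 ≤ r → X.Ample r)
    (U : Finset V) (hU : (U : Set V) ⊆ X.verts)
    (A : Set (Finset V)) (hA : A ⊆ X.induced (U : Set V)) (hAdc : DownClosed A) :
    {v | v ∈ X.verts ∧ v ∉ U ∧ X.link v ∩ X.induced (U : Set V) = A}.Infinite ∧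
      ∀ r : ℕ, 1 ≤ r →
        (X.inducedSub
          {v | v ∈ X.verts ∧ v ∉ U ∧ X.link v ∩ X.induced (U : Set V) = A}).Ample r :=
  stmt16_general X hX U hU A hA hAdc
end

section
/- The Rado complex is indestructible: let X be an ∞-ample simplicial complex with countably infinite vertex set, let F be a finite set of simplexes of X, and let Y be the complex obtained from X by deleting all simplexes that contain some simplex of F as a face, i.e., Y = { σ ∈ X : no τ ∈ F satisfies τ ⊆ σ }. Then Y is again an ∞-ample simplicial complex with countably infinite vertex set (a Rado complex). -/
/-!
A vertex `v` lying in no simplex of `F` cannot create a removed simplex: if `σ` survives in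
`Y = X.remove F` and `σ ∪ {v} ∈ X`, then `σ ∪ {v}` survives too, so `Lk_Y(v) ∩ Y_U = Lk_X(v) ∩ Y_U`.
Hence, to extend a subcomplex `A ⊆ Y_U`, apply the ampleness of `X` to `U ∪ V(F)`, which is
still finite, and the vertex it provides works for `Y`.
-/

namespace SComplex

variable {V : Type*} {X : SComplex V} {F : Set (Finset V)}

theorem verts_remove_subset : (X.remove F).verts ⊆ X.verts := fun _ h => h.1

theorem finite_vertsOf (hF : F.Finite) : (vertsOf F).Finite :=
  hF.biUnion fun σ _ => σ.finite_toSet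

theorem vertsOf_subset_verts (hF : F ⊆ X.faces) : vertsOf F ⊆ X.verts := by
  simp only [vertsOf, Set.iUnion_subset_iff]
  intro τ hτ v hv
  exact X.down_closed (hF hτ) (Finset.singleton_subset_iff.2 hv) (Finset.singleton_nonempty v)

theorem mem_verts_remove (hF : F ⊆ X.faces) {v : V} (hv : v ∈ X.verts)
    (hvF : v ∉ vertsOf F) : v ∈ (X.remove F).verts := by
  refine ⟨hv, fun τ hτ hsub => ?_⟩
  obtain ⟨u, hu⟩ := X.nonempty_of_mem (hF hτ)
  exact hvF (Set.mem_biUnion hτ (Finset.mem_singleton.1 (hsub hu) ▸ hu))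

theorem induced_remove_subset {U U' : Set V} (hUU' : U ⊆ U') :
    (X.remove F).induced U ⊆ X.induced U' :=
  fun _ hσ => ⟨hσ.1.1, hσ.2.trans hUU'⟩

variable [DecidableEq V]

theorem insert_mem_remove {v : V} {σ : Finset V} (hσ : σ ∈ (X.remove F).faces)
    (hins : insert v σ ∈ X.faces) (hvF : v ∉ vertsOf F) : insert v σ ∈ (X.remove F).faces :=
  ⟨hins, fun τ hτ hsub => hσ.2 τ hτ
    ((Finset.subset_insert_iff_of_notMem fun h => hvF (Set.mem_biUnion hτ h)).1 hsub)⟩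

theorem link_remove_inter_induced {v : V} (hvF : v ∉ vertsOf F) (U : Set V) :
    (X.remove F).link v ∩ (X.remove F).induced U = X.link v ∩ (X.remove F).induced U := by
  ext σ
  constructor
  · rintro ⟨⟨hσ, hvσ, hins⟩, hσU⟩
    exact ⟨⟨hσ.1, hvσ, hins.1⟩, hσU⟩
  · rintro ⟨⟨-, hvσ, hins⟩, hσU⟩
    exact ⟨⟨hσU.1, hvσ, insert_mem_remove hσU.1 hins hvF⟩, hσU⟩

theorem Ample.remove {r : ℕ} {S : Finset V} (hX : X.Ample (r + S.card)) (hF : F ⊆ X.faces)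
    (hS : (S : Set V) = vertsOf F) : (X.remove F).Ample r := by
  have hextend : ∀ U : Finset V, (U : Set V) ⊆ (X.remove F).verts → U.card ≤ r →
      ∀ A : Set (Finset V), A ⊆ (X.remove F).induced (U : Set V) → DownClosed A →
        ∃ v ∈ (X.remove F).verts, v ∉ U ∧
          (X.remove F).link v ∩ (X.remove F).induced (U : Set V) = A := by
    intro U hU hUr A hA hAdc
    have hUS : ((U ∪ S : Finset V) : Set V) ⊆ X.verts := by
      rw [Finset.coe_union, hS]
      exact Set.union_subset (hU.trans verts_remove_subset) (vertsOf_subset_verts hF)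
    have hUsub : (U : Set V) ⊆ (U ∪ S : Finset V) := Finset.coe_subset.2 Finset.subset_union_left
    obtain ⟨v, hvX, hvUS, hlink⟩ := hX.2 (U ∪ S) hUS
      ((Finset.card_union_le U S).trans (by omega)) A (hA.trans (induced_remove_subset hUsub)) hAdc
    have hvF : v ∉ vertsOf F := by
      rw [← hS]
      exact fun h => hvUS (Finset.mem_union_right U h)
    refine ⟨v, mem_verts_remove hF hvX hvF, fun h => hvUS (Finset.mem_union_left S h), ?_⟩
    rw [link_remove_inter_induced hvF]
    refine subset_antisymm ?_ (Set.subset_inter (hlink ▸ Set.inter_subset_left) hA)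
    rw [← hlink]
    exact Set.inter_subset_inter_right _ (induced_remove_subset hUsub)
  obtain ⟨v, hv, -⟩ := hextend ∅ (by simp) (by simp) ∅ (Set.empty_subset _) fun _ h => h.elim
  exact ⟨⟨{v}, hv⟩, hextend⟩

end SComplex

open SComplex in
/-- indestructibility: removing a finite set of simplexes from a Rado
complex leaves an `∞`-ample complex with countably infinite vertex set. -/
theorem stmt17 {V : Type*} [DecidableEq V] (X : SComplex V)
    (hc : X.verts.Countable) (hi : X.verts.Infinite)
    (hX : ∀ r : ℕ, 1 ≤ r → X.Ample r)
    (F : Set (Finset V)) (hF : F ⊆ X.faces) (hFfin : F.Finite) :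
    (X.remove F).verts.Countable ∧ (X.remove F).verts.Infinite ∧
      ∀ r : ℕ, 1 ≤ r → (X.remove F).Ample r := by
  have hFverts := finite_vertsOf hFfin
  refine ⟨hc.mono verts_remove_subset,
    (hi.sdiff hFverts).mono fun v hv => mem_verts_remove hF hv.1 hv.2, fun r _ => ?_⟩
  exact (hX _ (by omega)).remove hF hFverts.coe_toFinset
end

section
/- In an ∞-ample simplicial complex X with countably infinite vertex set, the link Lk_X(σ) of every simplex σ ∈ X is itself an ∞-ample simplicial complex with countably infinite vertex set (a Rado complex). -/
/-!
Write `Y = Lk_X(σ)`. To realise a subcomplex `A ⊆ Y_U` as `Lk_Y(v) ∩ Y_U`, apply the ampleness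
of `X` to the vertex set `U ∪ σ` and the join `A * σ` of `A` with the full simplex on `σ`: the
vertex `v` it provides has `σ` in its link, so `v ∈ V(Y)`, and `τ ↦ τ ∪ σ` identifies
`Lk_Y(v) ∩ Y_U` with `Lk_X(v) ∩ X_{U ∪ σ} = A * σ` restricted to simplexes containing `σ`,
that is, with `A`. Hence `Y` is `r`-ample whenever `X` is `(r + |σ|)`-ample; infinitude of the
vertex set follows from ampleness alone.
-/

namespace SComplex

variable {V : Type*}

theorem coe_subset_verts_of_mem {X : SComplex V} {σ : Finset V} (hσ : σ ∈ X.faces) :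
    (σ : Set V) ⊆ X.verts := fun _ hv =>
  X.down_closed hσ (Finset.singleton_subset_iff.mpr hv) (Finset.singleton_nonempty _)

theorem verts_infinite_of_forall_ample [DecidableEq V] {X : SComplex V}
    (hX : ∀ r, X.Ample r) : X.verts.Infinite := by
  intro hfin
  obtain ⟨v, hvX, hvF, -⟩ := (hX hfin.toFinset.card).2 hfin.toFinset (by simp) le_rfl ∅
    (Set.empty_subset _) (fun _ h => h.elim)
  exact hvF (hfin.mem_toFinset.mpr hvX)

variable [DecidableEq V] {X : SComplex V} {σ τ : Finset V} {v : V}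

theorem mem_verts_linkSimplex_of_mem_link (hσv : σ ∈ X.link v) :
    v ∈ (X.linkSimplex σ).verts := by
  obtain ⟨-, hvσ, hins⟩ := hσv
  rw [Finset.insert_eq] at hins
  exact ⟨X.down_closed hins Finset.subset_union_left (Finset.singleton_nonempty v),
    Finset.disjoint_singleton_left.mpr hvσ, hins⟩

theorem mem_link_linkSimplex_iff (hvσ : v ∉ σ) :
    τ ∈ (X.linkSimplex σ).link v ↔
      τ.Nonempty ∧ Disjoint τ σ ∧ τ ∪ σ ∈ X.link v := by
  simp only [link, linkSimplex, Set.mem_ofPred_eq, Finset.insert_union, Finset.mem_union,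
    Finset.disjoint_insert_left, not_or]
  constructor
  · rintro ⟨⟨hτ, hτσ, hτσX⟩, hvτ, -, -, hins⟩
    exact ⟨X.nonempty_of_mem hτ, hτσ, hτσX, ⟨hvτ, hvσ⟩, hins⟩
  · rintro ⟨hne, hτσ, hτσX, ⟨hvτ, -⟩, hins⟩
    exact ⟨⟨X.down_closed hτσX Finset.subset_union_left hne, hτσ, hτσX⟩, hvτ,
      X.down_closed hins (Finset.insert_subset_insert _ Finset.subset_union_left)
        (Finset.insert_nonempty _ _), ⟨hvσ, hτσ⟩, hins⟩

/-- The faces of the join `A * σ` of `A` with the full simplex on `σ`. -/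
def joinSimplex (A : Set (Finset V)) (σ : Finset V) : Set (Finset V) :=
  {ρ | ρ.Nonempty ∧ (ρ \ σ = ∅ ∨ ρ \ σ ∈ A)}

theorem self_mem_joinSimplex (A : Set (Finset V)) (hσ : σ.Nonempty) : σ ∈ joinSimplex A σ :=
  ⟨hσ, Or.inl (Finset.sdiff_self σ)⟩

theorem union_mem_joinSimplex_iff {A : Set (Finset V)} (hτσ : Disjoint τ σ)
    (hτ : τ.Nonempty) :
    τ ∪ σ ∈ joinSimplex A σ ↔ τ ∈ A := by
  simp only [joinSimplex, Set.mem_ofPred_eq, Finset.union_sdiff_right,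
    Finset.sdiff_eq_self_of_disjoint hτσ, hτ.ne_empty, false_or,
    and_iff_right (hτ.mono Finset.subset_union_left)]

theorem DownClosed.joinSimplex {A : Set (Finset V)} (hA : DownClosed A) (σ : Finset V) :
    DownClosed (joinSimplex A σ) := by
  rintro ρ ⟨-, hρA⟩ ρ' hρ' hne
  refine ⟨hne, ?_⟩
  have hsub : ρ' \ σ ⊆ ρ \ σ := Finset.sdiff_subset_sdiff hρ' subset_rfl
  rcases Finset.eq_empty_or_nonempty (ρ' \ σ) with h0 | hne'
  · exact Or.inl h0
  · exact Or.inr (hρA.elim (fun h0 => absurd (Finset.subset_empty.mp (h0 ▸ hsub))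
      hne'.ne_empty) (fun h => hA h hsub hne'))

theorem joinSimplex_subset_induced {A : Set (Finset V)} {U : Finset V} (hσ : σ ∈ X.faces)
    (hA : A ⊆ (X.linkSimplex σ).induced U) :
    joinSimplex A σ ⊆ X.induced ↑(U ∪ σ) := by
  rintro ρ ⟨hne, hρA⟩
  have hcover : ρ \ σ ∪ σ ∈ X.induced ↑(U ∪ σ) := by
    rcases hρA with h0 | hρA
    · rw [h0, Finset.empty_union]
      exact ⟨hσ, Finset.coe_subset.mpr Finset.subset_union_right⟩
    · obtain ⟨⟨-, -, hX⟩, hU⟩ := hA hρA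
      exact ⟨hX, Finset.coe_subset.mpr
        (Finset.union_subset_union_left (Finset.coe_subset.mp hU))⟩
  have hρ : ρ ⊆ ρ \ σ ∪ σ := by
    rw [Finset.sdiff_union_self_eq_union]
    exact Finset.subset_union_left
  exact (X.inducedSub _).down_closed hcover hρ hne

theorem exists_link_linkSimplex_inter_induced_eq {r : ℕ} (hX : X.Ample (r + σ.card))
    (hσ : σ ∈ X.faces) {U : Finset V} (hU : (U : Set V) ⊆ (X.linkSimplex σ).verts)
    (hUr : U.card ≤ r) {A : Set (Finset V)} (hA : A ⊆ (X.linkSimplex σ).induced U)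
    (hAdc : DownClosed A) :
    ∃ v ∈ (X.linkSimplex σ).verts, v ∉ U ∧
      (X.linkSimplex σ).link v ∩ (X.linkSimplex σ).induced U = A := by
  have hUσ : ((U ∪ σ : Finset V) : Set V) ⊆ X.verts := by
    rw [Finset.coe_union]
    exact Set.union_subset (fun _ hu => (hU hu).1) (coe_subset_verts_of_mem hσ)
  obtain ⟨v, -, hvU, hlink⟩ := hX.2 (U ∪ σ) hUσ
    ((Finset.card_union_le _ _).trans (Nat.add_le_add_right hUr _)) (joinSimplex A σ)
    (joinSimplex_subset_induced hσ hA) (hAdc.joinSimplex σ)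
  have hσv : σ ∈ X.link v := (hlink.ge (self_mem_joinSimplex A (X.nonempty_of_mem hσ))).1
  refine ⟨v, mem_verts_linkSimplex_of_mem_link hσv,
    fun h => hvU (Finset.mem_union_left _ h), ?_⟩
  ext τ
  constructor
  · rintro ⟨hτv, ⟨hτX, hτσ, hτσX⟩, hτU⟩
    rw [← union_mem_joinSimplex_iff hτσ (X.nonempty_of_mem hτX), ← hlink]
    exact ⟨((mem_link_linkSimplex_iff hσv.2.1).1 hτv).2.2, hτσX,
      Finset.coe_subset.mpr (Finset.union_subset_union_left (Finset.coe_subset.mp hτU))⟩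
  · intro hτA
    obtain ⟨hτY, hτU⟩ := hA hτA
    have hne := X.nonempty_of_mem hτY.1
    have hτσv := (hlink.ge ((union_mem_joinSimplex_iff hτY.2.1 hne).2 hτA)).1
    exact ⟨(mem_link_linkSimplex_iff hσv.2.1).2 ⟨hne, hτY.2.1, hτσv⟩, hτY, hτU⟩

theorem Ample.linkSimplex {r : ℕ} (hX : X.Ample (r + σ.card)) (hσ : σ ∈ X.faces) :
    (X.linkSimplex σ).Ample r := by
  refine ⟨?_, fun U hU hUr A hA hAdc =>
    exists_link_linkSimplex_inter_induced_eq hX hσ hU hUr hA hAdc⟩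
  obtain ⟨v, hv, -⟩ := exists_link_linkSimplex_inter_induced_eq hX hσ (U := ∅) (by simp)
    (Nat.zero_le r) (Set.empty_subset _) (fun _ h => h.elim)
  exact ⟨{v}, hv⟩

end SComplex

open SComplex in
theorem stmt19_general {V : Type*} [DecidableEq V] (X : SComplex V)
    (hc : X.verts.Countable)
    (hX : ∀ r : ℕ, 1 ≤ r → X.Ample r)
    (σ : Finset V) (hσ : σ ∈ X.faces) :
    (X.linkSimplex σ).verts.Countable ∧ (X.linkSimplex σ).verts.Infinite ∧
      ∀ r : ℕ, 1 ≤ r → (X.linkSimplex σ).Ample r := by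
  have hample : ∀ r, (X.linkSimplex σ).Ample r := fun r =>
    (hX (r + σ.card) (by have := (X.nonempty_of_mem hσ).card_pos; omega)).linkSimplex hσ
  exact ⟨hc.mono fun _ hv => hv.1, verts_infinite_of_forall_ample hample, fun r _ => hample r⟩

open SComplex in
/-- in a Rado complex, the link of every simplex is again an `∞`-ample
complex with countably infinite vertex set. -/
theorem stmt19 {V : Type*} [DecidableEq V] (X : SComplex V)
    (hc : X.verts.Countable) (hi : X.verts.Infinite)
    (hX : ∀ r : ℕ, 1 ≤ r → X.Ample r)
    (σ : Finset V) (hσ : σ ∈ X.faces) :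
    (X.linkSimplex σ).verts.Countable ∧ (X.linkSimplex σ).verts.Infinite ∧
      ∀ r : ℕ, 1 ≤ r → (X.linkSimplex σ).Ample r :=
  stmt19_general X hc hX σ hσ
end
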